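/- arXiv:2602.00326 — 2 statements merged into one kernel-verified Lean document; each statement's English description precedes it below -/
import Mathlib

section
/- If (X,d,μ) is a space of homogeneous type with doubling constant A, then the sections E(x,r) satisfy the doubling property 0 < μ^k(E(x,2r)) ≤ Ã μ^k(E(x,r)) < ∞ for all x ∈ X, r > 0, with Ã = (8κ)^{k log₂ A}. -/
/-!
The section `E(x, r)` is squeezed between two cubes: `B(x, r)^k ⊆ E(x, r) ⊆ B(x, 2κr)^k`, the
first by taking `u = x` in the infimum defining `ρ`, the second by the quasi-triangle inequality
through a near-optimal centre `u`. Hence `μ^k(E(x, 2r)) ≤ μ(B(x, 4κr))^k`, and doubling `m` times,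
with `4κ ≤ 2^m ≤ 8κ`, bounds this by `(A^m)^k μ(B(x, r))^k ≤ (8κ)^{k log₂ A} μ^k(E(x, r))`.
-/

open MeasureTheory

/-- The hypermetric of order `k+1` on `X` induced by the quasi-metric `d`. -/
noncomputable def rho {X : Type*} [Nonempty X] (d : X → X → ℝ) {k : ℕ}
    (x : X) (y : Fin k → X) : ℝ :=
  ⨅ u : X, ⨆ i, d ((Fin.cons x y : Fin (k + 1) → X) i) u

/-- The section at `x` of the `ρ`-tube of width `r` about the diagonal of `X^{k+1}`. -/
def sectionE {X : Type*} [Nonempty X] (d : X → X → ℝ) (k : ℕ) (x : X) (r : ℝ) :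
    Set (Fin k → X) :=
  {y : Fin k → X | rho d x y < r}

section Hypermetric

variable {X : Type*} [Nonempty X] {d : X → X → ℝ} {k : ℕ} {x : X} {s : ℝ}

lemma pi_ball_subset_sectionE (hnn : ∀ x y, 0 ≤ d x y) (hsym : ∀ x y, d x y = d y x)
    (hself : ∀ x, d x x = 0) (hs : 0 < s) :
    Set.univ.pi (fun _ : Fin k => {z | d x z < s}) ⊆ sectionE d k x s := by
  intro y hy
  have hbdd : BddBelow (Set.range fun u => ⨆ i, d ((Fin.cons x y : Fin (k + 1) → X) i) u) :=
    ⟨0, by rintro _ ⟨u, rfl⟩; exact Real.iSup_nonneg fun i => hnn _ _⟩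
  refine (ciInf_le hbdd x).trans_lt ?_
  obtain ⟨i₀, hi₀⟩ := Finite.exists_max fun i => d ((Fin.cons x y : Fin (k + 1) → X) i) x
  refine (ciSup_le hi₀).trans_lt ?_
  induction i₀ using Fin.cases with
  | zero => simpa [hself] using hs
  | succ j => simpa [hsym (y j) x] using hy j (Set.mem_univ j)

lemma sectionE_subset_pi_ball {κ : ℝ} (hκ : 0 < κ) (hsym : ∀ x y, d x y = d y x)
    (htri : ∀ x y z, d x z ≤ κ * (d x y + d y z)) :
    sectionE d k x s ⊆ Set.univ.pi (fun _ : Fin k => {z | d x z < 2 * κ * s}) := by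
  intro y hy i _
  obtain ⟨u, hu⟩ := exists_lt_of_ciInf_lt (show rho d x y < s from hy)
  have hbdd : BddAbove (Set.range fun i => d ((Fin.cons x y : Fin (k + 1) → X) i) u) :=
    (Set.finite_range _).bddAbove
  have hxu : d x u < s := (le_ciSup hbdd 0).trans_lt hu
  have hyu : d (y i) u < s := (le_ciSup hbdd i.succ).trans_lt hu
  calc d x (y i) ≤ κ * (d x u + d u (y i)) := htri x u (y i)
    _ < κ * (s + s) := by rw [hsym u (y i)]; gcongr
    _ = 2 * κ * s := by ring

end Hypermetric

section Measure

variable {X : Type*} [MeasurableSpace X] {d : X → X → ℝ} {μ : Measure X} {x : X}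

lemma sigmaFinite_of_measure_ball_lt_top (hfin : ∀ r : ℝ, 0 < r → μ {y | d x y < r} < ⊤) :
    SigmaFinite μ := by
  refine ⟨⟨⟨fun n : ℕ => {y | d x y < n + 1}, fun _ => trivial,
    fun n => hfin (n + 1) n.cast_add_one_pos, ?_⟩⟩⟩
  refine Set.eq_univ_of_forall fun y => Set.mem_iUnion.2 ⟨⌊d x y⌋₊, ?_⟩
  exact Nat.lt_floor_add_one (d x y)

lemma measure_ball_two_pow_mul_le {C : ENNReal}
    (hdbl : ∀ r : ℝ, 0 < r → μ {y | d x y < 2 * r} ≤ C * μ {y | d x y < r}) (m : ℕ) {r : ℝ}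
    (hr : 0 < r) : μ {y | d x y < 2 ^ m * r} ≤ C ^ m * μ {y | d x y < r} := by
  induction m generalizing r with
  | zero => simp
  | succ n ih =>
    calc μ {y | d x y < 2 ^ (n + 1) * r}
        = μ {y | d x y < 2 ^ n * (2 * r)} := by rw [pow_succ, mul_assoc]
      _ ≤ C ^ n * μ {y | d x y < 2 * r} := ih (by positivity)
      _ ≤ C ^ n * (C * μ {y | d x y < r}) := by gcongr; exact hdbl r hr
      _ = C ^ (n + 1) * μ {y | d x y < r} := by rw [pow_succ, mul_assoc]

lemma measure_pi_pi_ball [SigmaFinite μ] (k : ℕ) (r : ℝ) :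
    Measure.pi (fun _ : Fin k => μ) (Set.univ.pi fun _ => {y | d x y < r})
      = μ {y | d x y < r} ^ k := by
  simp [Measure.pi_pi]

variable [Nonempty X] [SigmaFinite μ] {k : ℕ} {s : ℝ}

lemma measure_ball_pow_le_pi_sectionE (hnn : ∀ x y, 0 ≤ d x y) (hsym : ∀ x y, d x y = d y x)
    (hself : ∀ x, d x x = 0) (hs : 0 < s) :
    μ {y | d x y < s} ^ k ≤ Measure.pi (fun _ : Fin k => μ) (sectionE d k x s) :=
  (measure_pi_pi_ball k s).symm.trans_le
    (measure_mono (pi_ball_subset_sectionE hnn hsym hself hs))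

lemma pi_sectionE_le_measure_ball_pow {κ : ℝ} (hκ : 0 < κ) (hsym : ∀ x y, d x y = d y x)
    (htri : ∀ x y z, d x z ≤ κ * (d x y + d y z)) :
    Measure.pi (fun _ : Fin k => μ) (sectionE d k x s) ≤ μ {y | d x y < 2 * κ * s} ^ k :=
  (measure_mono (sectionE_subset_pi_ball hκ hsym htri)).trans_eq (measure_pi_pi_ball k _)

end Measure

lemma pow_le_rpow_logb {A t : ℝ} (hA : 1 ≤ A) {m : ℕ} (h : (2 : ℝ) ^ m ≤ t) :
    A ^ m ≤ t ^ Real.logb 2 A := by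
  calc A ^ m = ((2 : ℝ) ^ Real.logb 2 A) ^ m := by
        rw [Real.rpow_logb two_pos (by norm_num) (by linarith)]
    _ = ((2 : ℝ) ^ m) ^ Real.logb 2 A := Real.rpow_pow_comm zero_le_two _ _
    _ ≤ t ^ Real.logb 2 A :=
        Real.rpow_le_rpow (by positivity) h (Real.logb_nonneg one_lt_two hA)

lemma ofReal_pow_pow_le_ofReal_rpow_mul_logb {A t : ℝ} (hA : 1 ≤ A) {m : ℕ}
    (h : (2 : ℝ) ^ m ≤ t) (k : ℕ) :
    (ENNReal.ofReal A ^ m) ^ k ≤ ENNReal.ofReal (t ^ ((k : ℝ) * Real.logb 2 A)) := by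
  have ht : 0 ≤ t := (pow_nonneg zero_le_two m).trans h
  rw [mul_comm, Real.rpow_mul ht, Real.rpow_natCast, ← ENNReal.ofReal_pow (by linarith),
    ← ENNReal.ofReal_pow (by positivity)]
  exact ENNReal.ofReal_le_ofReal (pow_le_pow_left₀ (by positivity) (pow_le_rpow_logb hA h) k)

lemma exists_two_pow_mem_Icc {c : ℝ} (hc : 1 ≤ c) : ∃ m : ℕ, c ≤ 2 ^ m ∧ (2 : ℝ) ^ m ≤ 2 * c := by
  obtain ⟨n, hn, hcn⟩ := exists_nat_pow_near hc one_lt_two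
  exact ⟨n + 1, hcn.le, by rw [pow_succ']; linarith⟩

/-- If `(X, d, μ)` is a space of homogeneous type with doubling constant `A`, the
sections `E(x, r)` satisfy the doubling property
`0 < μ^k(E(x, 2r)) ≤ Ã μ^k(E(x, r)) < ∞` with `Ã = (8κ)^{k log₂ A}`. -/
theorem stmt5 {X : Type*} [Nonempty X] [MeasurableSpace X] (d : X → X → ℝ)
    (κ A : ℝ) (hκ : 1 ≤ κ) (hA : 1 < A)
    (hnn : ∀ x y, 0 ≤ d x y) (hsym : ∀ x y, d x y = d y x)
    (hzero : ∀ x y, d x y = 0 ↔ x = y)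
    (htri : ∀ x y z, d x z ≤ κ * (d x y + d y z))
    (μ : Measure X)
    (hpos : ∀ (x : X) (r : ℝ), 0 < r → 0 < μ {y | d x y < r})
    (hfin : ∀ (x : X) (r : ℝ), 0 < r → μ {y | d x y < r} < ⊤)
    (hdbl : ∀ (x : X) (r : ℝ), 0 < r →
      μ {y | d x y < 2 * r} ≤ ENNReal.ofReal A * μ {y | d x y < r})
    (k : ℕ) (x : X) (r : ℝ) (hr : 0 < r) :
    0 < (Measure.pi fun _ : Fin k => μ) (sectionE d k x (2 * r)) ∧
    (Measure.pi fun _ : Fin k => μ) (sectionE d k x (2 * r)) ≤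
      ENNReal.ofReal ((8 * κ) ^ ((k : ℝ) * Real.logb 2 A)) *
        (Measure.pi fun _ : Fin k => μ) (sectionE d k x r) ∧
    (Measure.pi fun _ : Fin k => μ) (sectionE d k x r) < ⊤ := by
  have hself : ∀ x, d x x = 0 := fun x => (hzero x x).2 rfl
  have := sigmaFinite_of_measure_ball_lt_top (hfin x)
  obtain ⟨m, h4κ, h8κ⟩ := exists_two_pow_mem_Icc (c := 4 * κ) (by linarith)
  refine ⟨(ENNReal.pow_pos (hpos x _ (by positivity)) k).trans_le
      (measure_ball_pow_le_pi_sectionE hnn hsym hself (by positivity)), ?_,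
    (pi_sectionE_le_measure_ball_pow (by positivity) hsym htri).trans_lt
      (ENNReal.pow_lt_top (hfin x _ (by positivity)))⟩
  calc Measure.pi (fun _ => μ) (sectionE d k x (2 * r))
      ≤ μ {y | d x y < 2 * κ * (2 * r)} ^ k :=
        pi_sectionE_le_measure_ball_pow (by positivity) hsym htri
    _ ≤ μ {y | d x y < 2 ^ m * r} ^ k := by
        have hrad : 2 * κ * (2 * r) ≤ 2 ^ m * r := by
          linarith [mul_le_mul_of_nonneg_right h4κ hr.le]
        gcongr ?_ ^ k
        exact measure_mono fun y hy => lt_of_lt_of_le hy hrad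
    _ ≤ (ENNReal.ofReal A ^ m) ^ k * μ {y | d x y < r} ^ k := by
        rw [← mul_pow]
        exact pow_le_pow_left₀ zero_le (measure_ball_two_pow_mul_le (hdbl x) m hr) k
    _ ≤ ENNReal.ofReal ((8 * κ) ^ ((k : ℝ) * Real.logb 2 A)) *
          Measure.pi (fun _ => μ) (sectionE d k x r) := by
        gcongr
        · exact ofReal_pow_pow_le_ofReal_rpow_mul_logb hA.le (by linarith) k
        · exact measure_ball_pow_le_pi_sectionE hnn hsym hself hr
end

section
/- Let (X,d,μ) be a complete α-Ahlfors regular space and φ nonincreasing with 0 < s(φ) = ∫₀^∞ φ(t)t^{kα−1}dt < ∞. If ψ₁,…,ψ_k are continuous compactly supported real functions on X, then for every x ∈ X, lim_{ε→0} (1/J(x,ε)) ∫_{X^k} φ(ρ(x,x₁,…,x_k)/ε) |∏_j ψ_j(x_j) − ∏_j ψ_j(x)| dμ^k = 0. -/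
/-!
Up to the factor `2κ`, `ρ(x, y₁, …, y_k)` is comparable with `maxⱼ d(x, yⱼ)`, so everything
reduces to product balls, whose `μ^k`-measure is comparable to `r^{kα}`; hence
`J(x, ε) ≳ ε^{kα}`. Near the diagonal, where `maxⱼ d(x, yⱼ) < r`, the oscillation
`|∏ⱼ ψⱼ(yⱼ) − ∏ⱼ ψⱼ(x)|` is small by continuity. Away from it, cutting `X^k` into dyadic shells
and using that `φ` is nonincreasing bounds the integral by `ε^{kα}` times the tail
`∫_{r/(4κε)}^∞ φ(t) t^{kα−1} dt`, which tends to `0` with `ε`.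
-/

open MeasureTheory Set Filter Topology

open scoped ENNReal

/-- The reciprocal of `∫_{1/2}^1 t^{q-1} dt`. -/
noncomputable def dyadicConst (q : ℝ) : ℝ := q / (1 - 2 ^ (-q))

theorem dyadicConst_pos {q : ℝ} (hq : 0 < q) : 0 < dyadicConst q :=
  div_pos hq (sub_pos.2 (Real.rpow_lt_one_of_one_lt_of_neg one_lt_two (neg_neg_of_pos hq)))

theorem mul_rpow_le_integral_Ioc {φ : ℝ → ℝ} {q b : ℝ} (hq : 0 < q) (hb : 0 < b)
    (hφ : AntitoneOn φ (Ici 0))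
    (hφint : IntegrableOn (fun t => φ t * t ^ (q - 1)) (Ioc (b / 2) b)) :
    φ b * b ^ q ≤ dyadicConst q * ∫ t in Ioc (b / 2) b, φ t * t ^ (q - 1) := by
  have h2q : 0 < 1 - (2 : ℝ) ^ (-q) := by
    linarith [Real.rpow_lt_one_of_one_lt_of_neg one_lt_two (neg_neg_of_pos hq)]
  have hmoment : ∫ t in Ioc (b / 2) b, φ b * t ^ (q - 1) = φ b * (b ^ q * (1 - 2 ^ (-q)) / q) := by
    rw [integral_const_mul, ← intervalIntegral.integral_of_le (by linarith),
      integral_rpow (Or.inl (by linarith)), sub_add_cancel, Real.div_rpow hb.le zero_le_two,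
      Real.rpow_neg zero_le_two]
    ring
  have hmono : ∫ t in Ioc (b / 2) b, φ b * t ^ (q - 1) ≤ ∫ t in Ioc (b / 2) b, φ t * t ^ (q - 1) :=
    setIntegral_mono_on
      (((intervalIntegral.intervalIntegrable_rpow' (by linarith : (-1 : ℝ) < q - 1)).1).const_mul _)
      hφint measurableSet_Ioc fun t ht =>
        mul_le_mul_of_nonneg_right
          (hφ (mem_Ici.2 (by linarith [ht.1])) hb.le ht.2) (Real.rpow_nonneg (by linarith [ht.1]) _)
  rw [hmoment] at hmono
  calc φ b * b ^ q = dyadicConst q * (φ b * (b ^ q * (1 - 2 ^ (-q)) / q)) := by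
        unfold dyadicConst
        field_simp
    _ ≤ _ := mul_le_mul_of_nonneg_left hmono (dyadicConst_pos hq).le

theorem tsum_setLIntegral_Ioc_two_pow_le (f : ℝ → ℝ≥0∞) {a : ℝ} (ha : 0 ≤ a) :
    ∑' n : ℕ, ∫⁻ t in Ioc (a * 2 ^ n) (a * 2 ^ (n + 1)), f t ≤ ∫⁻ t in Ioi a, f t := by
  have hmono : Monotone fun n : ℕ => a * 2 ^ n := fun m n hmn =>
    mul_le_mul_of_nonneg_left (pow_le_pow_right₀ one_le_two hmn) ha
  have hdisj := hmono.pairwise_disjoint_on_Ioc_succ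
  simp only [Order.succ_eq_add_one] at hdisj
  rw [← lintegral_iUnion (fun _ => measurableSet_Ioc) hdisj]
  exact lintegral_mono_set (iUnion_subset fun n => Ioc_subset_Ioi_self.trans
    (Ioi_subset_Ioi (le_mul_of_one_le_right ha (one_le_pow₀ one_le_two))))

theorem lintegral_le_tsum_mul_measure {Y : Type*} [MeasurableSpace Y] (ν : Measure Y)
    {h : Y → ℝ≥0∞} {a : ℕ → ℝ≥0∞} {S : ℕ → Set Y} (hS : ∀ y, ∃ n, y ∈ S n ∧ h y ≤ a n) :
    ∫⁻ y, h y ∂ν ≤ ∑' n, a n * ν (S n) := by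
  have hpt : ∀ y, h y ≤ ∑' n, (toMeasurable ν (S n)).indicator (fun _ => a n) y := fun y => by
    obtain ⟨n, hyn, hhn⟩ := hS y
    calc h y ≤ a n := hhn
      _ = (toMeasurable ν (S n)).indicator (fun _ => a n) y :=
          (indicator_of_mem (subset_toMeasurable ν _ hyn) (fun _ => a n)).symm
      _ ≤ _ := ENNReal.le_tsum n
  calc ∫⁻ y, h y ∂ν ≤ ∫⁻ y, ∑' n, (toMeasurable ν (S n)).indicator (fun _ => a n) y ∂ν :=
        lintegral_mono hpt
    _ = ∑' n, a n * ν (S n) := by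
        rw [lintegral_tsum fun n => (measurable_const.indicator
          (measurableSet_toMeasurable ν _)).aemeasurable]
        simp only [lintegral_indicator_const (measurableSet_toMeasurable ν _), measure_toMeasurable]

theorem integral_le_of_lintegral_ofReal_le {Y : Type*} [MeasurableSpace Y] {ν : Measure Y}
    {f : Y → ℝ} {b : ℝ} (hf : ∀ y, 0 ≤ f y) (hb : 0 ≤ b)
    (h : ∫⁻ y, ENNReal.ofReal (f y) ∂ν ≤ ENNReal.ofReal b) : ∫ y, f y ∂ν ≤ b := by
  by_cases hfi : Integrable f ν
  · rw [integral_eq_lintegral_of_nonneg_ae (ae_of_all _ hf) hfi.aestronglyMeasurable]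
    exact ENNReal.toReal_le_of_le_ofReal hb h
  · rwa [integral_undef hfi]

theorem ofReal_setIntegral_eq_setLIntegral_ofReal {X : Type*} [MeasurableSpace X] {μ : Measure X}
    {f : X → ℝ} {s : Set X} (hs : MeasurableSet s) (hf : IntegrableOn f s μ)
    (hnn : ∀ x ∈ s, 0 ≤ f x) :
    ENNReal.ofReal (∫ x in s, f x ∂μ) = ∫⁻ x in s, ENNReal.ofReal (f x) ∂μ :=
  ofReal_integral_eq_lintegral_ofReal hf ((ae_restrict_iff' hs).2 (ae_of_all _ hnn))

theorem inv_integral_mul_integral_le_add_div {Y : Type*} [MeasurableSpace Y] {ν : Measure Y}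
    {f g h : Y → ℝ} {η M m T : ℝ} (hf : ∀ y, 0 ≤ f y) (hg : ∀ y, 0 ≤ g y) (hη : 0 ≤ η)
    (hM : 0 ≤ M) (hT : 0 ≤ T) (hm : 0 < m) (hfm : m ≤ ∫ y, f y ∂ν)
    (hfg : ∀ y, f y * g y ≤ η * f y + M * h y)
    (hh : ∫⁻ y, ENNReal.ofReal (h y) ∂ν ≤ ENNReal.ofReal T) :
    (∫ y, f y ∂ν)⁻¹ * ∫ y, f y * g y ∂ν ≤ η + M * T / m := by
  have hJ : 0 < ∫ y, f y ∂ν := hm.trans_le hfm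
  have hfi : Integrable f ν := by
    by_contra hfi
    rw [integral_undef hfi] at hJ
    exact lt_irrefl _ hJ
  have hηf : Integrable (fun y => η * f y) ν := hfi.const_mul η
  have hI : ∫ y, f y * g y ∂ν ≤ η * ∫ y, f y ∂ν + M * T := by
    refine integral_le_of_lintegral_ofReal_le (fun y => mul_nonneg (hf y) (hg y))
      (by positivity) ?_
    calc ∫⁻ y, ENNReal.ofReal (f y * g y) ∂ν
        ≤ ∫⁻ y, ENNReal.ofReal (η * f y) + ENNReal.ofReal M * ENNReal.ofReal (h y) ∂ν :=
          lintegral_mono fun y => (ENNReal.ofReal_le_ofReal (hfg y)).trans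
            (ENNReal.ofReal_add_le.trans_eq (by rw [ENNReal.ofReal_mul hM]))
      _ = ∫⁻ y, ENNReal.ofReal (η * f y) ∂ν + ENNReal.ofReal M * ∫⁻ y, ENNReal.ofReal (h y) ∂ν := by
          rw [lintegral_add_left' hηf.aemeasurable.ennreal_ofReal,
            lintegral_const_mul' _ _ ENNReal.ofReal_ne_top]
      _ ≤ ENNReal.ofReal (η * ∫ y, f y ∂ν) + ENNReal.ofReal M * ENNReal.ofReal T := by
          rw [← integral_const_mul, ofReal_integral_eq_lintegral_ofReal hηf
            (ae_of_all _ fun y => mul_nonneg hη (hf y))]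
          gcongr
      _ = ENNReal.ofReal (η * ∫ y, f y ∂ν + M * T) := by
          rw [ENNReal.ofReal_add (by positivity) (by positivity), ENNReal.ofReal_mul hM]
  calc (∫ y, f y ∂ν)⁻¹ * ∫ y, f y * g y ∂ν ≤ (∫ y, f y ∂ν)⁻¹ * (η * ∫ y, f y ∂ν + M * T) := by
        gcongr
    _ = η + M * T / ∫ y, f y ∂ν := by field_simp
    _ ≤ η + M * T / m := by gcongr

/-- `ρ` is comparable to the radius of the sets `B s`, whose measure grows like `s ^ q`.
For the hypermetric around `x`, `B s` is the product ball `{y | ∀ j, d x (y j) < s}`. -/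
structure IsAhlforsGauge {Y : Type*} [MeasurableSpace Y] (ν : Measure Y) (ρ : Y → ℝ)
    (B : ℝ → Set Y) (q γ Γ L : ℝ) : Prop where
  nonneg : ∀ y, 0 ≤ ρ y
  mono : Monotone B
  exists_mem : ∀ y, ∃ s, y ∈ B s
  le_measure : ∀ s > 0, ENNReal.ofReal (γ * s ^ q) ≤ ν (B s)
  measure_le : ∀ s > 0, ν (B s) ≤ ENNReal.ofReal (Γ * s ^ q)
  le_of_mem : ∀ s > 0, ∀ y ∈ B s, ρ y ≤ s
  le_mul_of_notMem : ∀ s, ∀ y ∉ B s, s ≤ L * ρ y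

namespace IsAhlforsGauge

variable {Y : Type*} [MeasurableSpace Y] {ν : Measure Y} {ρ : Y → ℝ} {B : ℝ → Set Y}
  {q γ Γ L : ℝ} {φ : ℝ → ℝ}

theorem lintegral_comp_max_le (hG : IsAhlforsGauge ν ρ B q γ Γ L) (hq : 0 < q) (hΓ : 0 ≤ Γ)
    (hL : 0 < L) (hφ : AntitoneOn φ (Ici 0)) (hφnn : ∀ t, 0 ≤ t → 0 ≤ φ t)
    (hφint : IntegrableOn (fun t => φ t * t ^ (q - 1)) (Ioi 0)) {ε R : ℝ} (hε : 0 < ε)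
    (hR : 0 < R) :
    ∫⁻ y, ENNReal.ofReal (φ (max (ρ y / ε) R)) ∂ν ≤ ENNReal.ofReal
      (Γ * (2 * L) ^ q * dyadicConst q * ε ^ q * ∫ t in Ioi (R / 2), φ t * t ^ (q - 1)) := by
  set K := Γ * (2 * L) ^ q * dyadicConst q * ε ^ q
  have hK : 0 ≤ K := by have := dyadicConst_pos hq; positivity
  have hF : ∀ t ∈ Ioi (0 : ℝ), 0 ≤ φ t * t ^ (q - 1) := fun t ht =>
    mul_nonneg (hφnn t (le_of_lt ht)) (Real.rpow_nonneg (le_of_lt ht) _)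
  have hcover : ∀ y, ∃ n : ℕ, y ∈ B (2 * L * ε * (R * 2 ^ n)) ∧
      ENNReal.ofReal (φ (max (ρ y / ε) R)) ≤ ENNReal.ofReal (φ (R * 2 ^ n)) := by
    classical
    intro y
    have hex : ∃ n : ℕ, y ∈ B (2 * L * ε * (R * 2 ^ n)) := by
      obtain ⟨s, hs⟩ := hG.exists_mem y
      obtain ⟨n, hn⟩ := pow_unbounded_of_one_lt (s / (2 * L * ε * R)) one_lt_two
      rw [div_lt_iff₀ (by positivity)] at hn
      exact ⟨n, hG.mono (by linarith) hs⟩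
    refine ⟨Nat.find hex, Nat.find_spec hex, ENNReal.ofReal_le_ofReal
      (hφ (mem_Ici.2 (by positivity)) (mem_Ici.2 (hR.le.trans (le_max_right _ _))) ?_)⟩
    -- the first ball containing `y` has radius comparable to `ρ y`
    rcases hN : Nat.find hex with _ | m
    · simp
    · have hm := hG.le_mul_of_notMem _ y (Nat.find_min hex (by omega : m < Nat.find hex))
      have hρ : 2 * ε * (R * 2 ^ m) ≤ ρ y :=
        le_of_mul_le_mul_left (by linarith [hm] : L * (2 * ε * (R * 2 ^ m)) ≤ L * ρ y) hL
      refine le_max_of_le_left ((le_div_iff₀ hε).2 ?_)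
      rw [pow_succ]
      linarith
  have hterm : ∀ n : ℕ, ENNReal.ofReal (φ (R * 2 ^ n)) * ν (B (2 * L * ε * (R * 2 ^ n))) ≤
      ENNReal.ofReal K * ∫⁻ t in Ioc (R / 2 * 2 ^ n) (R / 2 * 2 ^ (n + 1)),
        ENNReal.ofReal (φ t * t ^ (q - 1)) := by
    intro n
    set b := R * 2 ^ n
    have hb : 0 < b := by positivity
    have hint : IntegrableOn (fun t => φ t * t ^ (q - 1)) (Ioc (b / 2) b) :=
      hφint.mono_set fun t ht => (half_pos hb).trans ht.1
    rw [show R / 2 * 2 ^ n = b / 2 by ring, show R / 2 * 2 ^ (n + 1) = b by ring,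
      ← ofReal_setIntegral_eq_setLIntegral_ofReal measurableSet_Ioc hint
        fun t ht => hF t ((half_pos hb).trans ht.1), ← ENNReal.ofReal_mul hK]
    calc ENNReal.ofReal (φ b) * ν (B (2 * L * ε * b))
        ≤ ENNReal.ofReal (φ b) * ENNReal.ofReal (Γ * (2 * L * ε * b) ^ q) := by
          gcongr
          exact hG.measure_le _ (by positivity)
      _ = ENNReal.ofReal (φ b * (Γ * ((2 * L) ^ q * ε ^ q * b ^ q))) := by
          rw [← ENNReal.ofReal_mul (hφnn _ hb.le), Real.mul_rpow (by positivity) hb.le,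
            Real.mul_rpow (by positivity) hε.le]
      _ ≤ ENNReal.ofReal (K * ∫ t in Ioc (b / 2) b, φ t * t ^ (q - 1)) := by
          refine ENNReal.ofReal_le_ofReal ?_
          calc φ b * (Γ * ((2 * L) ^ q * ε ^ q * b ^ q))
              = Γ * (2 * L) ^ q * ε ^ q * (φ b * b ^ q) := by ring
            _ ≤ Γ * (2 * L) ^ q * ε ^ q *
                (dyadicConst q * ∫ t in Ioc (b / 2) b, φ t * t ^ (q - 1)) := by
                exact mul_le_mul_of_nonneg_left (mul_rpow_le_integral_Ioc hq hb hφ hint)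
                  (by positivity)
            _ = _ := by ring
  calc ∫⁻ y, ENNReal.ofReal (φ (max (ρ y / ε) R)) ∂ν
      ≤ ∑' n : ℕ, ENNReal.ofReal (φ (R * 2 ^ n)) * ν (B (2 * L * ε * (R * 2 ^ n))) :=
        lintegral_le_tsum_mul_measure ν hcover
    _ ≤ ∑' n : ℕ, ENNReal.ofReal K * ∫⁻ t in Ioc (R / 2 * 2 ^ n) (R / 2 * 2 ^ (n + 1)),
          ENNReal.ofReal (φ t * t ^ (q - 1)) := ENNReal.tsum_le_tsum hterm
    _ ≤ ENNReal.ofReal K * ∫⁻ t in Ioi (R / 2), ENNReal.ofReal (φ t * t ^ (q - 1)) := by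
        rw [ENNReal.tsum_mul_left]
        gcongr
        exact tsum_setLIntegral_Ioc_two_pow_le _ (by positivity)
    _ = _ := by
        rw [← ofReal_setIntegral_eq_setLIntegral_ofReal measurableSet_Ioi
          (hφint.mono_set (Ioi_subset_Ioi (by positivity)))
          fun t ht => hF t ((half_pos hR).trans ht), ← ENNReal.ofReal_mul hK]

theorem mul_rpow_le_integral (hG : IsAhlforsGauge ν ρ B q γ Γ L) (hφ : AntitoneOn φ (Ici 0))
    (hφnn : ∀ t, 0 ≤ t → 0 ≤ φ t) {ε r₀ : ℝ} (hε : 0 < ε) (hr₀ : 0 < r₀)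
    (hfi : Integrable (fun y => φ (ρ y / ε)) ν) :
    φ r₀ * γ * r₀ ^ q * ε ^ q ≤ ∫ y, φ (ρ y / ε) ∂ν := by
  have hf0 : ∀ y, 0 ≤ φ (ρ y / ε) := fun y => hφnn _ (div_nonneg (hG.nonneg y) hε.le)
  have hsub : B (ε * r₀) ⊆ {y | ENNReal.ofReal (φ r₀) ≤ ENNReal.ofReal (φ (ρ y / ε))} :=
    fun y hy => ENNReal.ofReal_le_ofReal (hφ (mem_Ici.2 (div_nonneg (hG.nonneg y) hε.le))
      (mem_Ici.2 hr₀.le) ((div_le_iff₀ hε).2 (by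
        linarith [hG.le_of_mem _ (by positivity) y hy])))
  rw [← ENNReal.ofReal_le_ofReal_iff (integral_nonneg hf0),
    ofReal_integral_eq_lintegral_ofReal hfi (ae_of_all _ hf0)]
  calc ENNReal.ofReal (φ r₀ * γ * r₀ ^ q * ε ^ q)
      = ENNReal.ofReal (φ r₀) * ENNReal.ofReal (γ * (ε * r₀) ^ q) := by
        rw [← ENNReal.ofReal_mul (hφnn _ hr₀.le), Real.mul_rpow hε.le hr₀.le]
        ring_nf
    _ ≤ ENNReal.ofReal (φ r₀) * ν {y | ENNReal.ofReal (φ r₀) ≤ ENNReal.ofReal (φ (ρ y / ε))} := by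
        gcongr
        exact (hG.le_measure _ (by positivity)).trans (measure_mono hsub)
    _ ≤ _ := mul_meas_ge_le_lintegral₀ hfi.aemeasurable.ennreal_ofReal _

theorem inv_integral_mul_integral_le (hG : IsAhlforsGauge ν ρ B q γ Γ L) (hq : 0 < q)
    (hγ : 0 < γ) (hΓ : 0 ≤ Γ) (hL : 0 < L) (hφ : AntitoneOn φ (Ici 0))
    (hφnn : ∀ t, 0 ≤ t → 0 ≤ φ t) (hφint : IntegrableOn (fun t => φ t * t ^ (q - 1)) (Ioi 0))
    {g : Y → ℝ} {M η r r₀ ε : ℝ} (hg0 : ∀ y, 0 ≤ g y) (hM : 0 ≤ M) (hgM : ∀ y, g y ≤ M)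
    (hη : 0 ≤ η) (hr : 0 < r) (hgr : ∀ y ∈ B r, g y ≤ η) (hr₀ : 0 < r₀) (hφr₀ : 0 < φ r₀)
    (hε : 0 < ε) (hfi : Integrable (fun y => φ (ρ y / ε)) ν) :
    (∫ y, φ (ρ y / ε) ∂ν)⁻¹ * ∫ y, φ (ρ y / ε) * g y ∂ν ≤
      η + M * (Γ * (2 * L) ^ q * dyadicConst q) / (φ r₀ * γ * r₀ ^ q) *
        ∫ t in Ioi (r / (L * ε) / 2), φ t * t ^ (q - 1) := by
  have hf0 : ∀ y, 0 ≤ φ (ρ y / ε) := fun y => hφnn _ (div_nonneg (hG.nonneg y) hε.le)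
  have hτ : 0 ≤ ∫ t in Ioi (r / (L * ε) / 2), φ t * t ^ (q - 1) :=
    setIntegral_nonneg measurableSet_Ioi fun t ht => by
      have ht0 : 0 ≤ t := (by positivity : (0 : ℝ) ≤ r / (L * ε) / 2).trans (le_of_lt ht)
      exact mul_nonneg (hφnn t ht0) (Real.rpow_nonneg ht0 _)
  have hφmax : ∀ y, 0 ≤ φ (max (ρ y / ε) (r / (L * ε))) := fun y =>
    hφnn _ ((by positivity : (0 : ℝ) ≤ r / (L * ε)).trans (le_max_right _ _))
  -- near the diagonal `g` is small; away from it the truncation at radius `r` is inactive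
  have hsplit : ∀ y, φ (ρ y / ε) * g y ≤
      η * φ (ρ y / ε) + M * φ (max (ρ y / ε) (r / (L * ε))) := by
    intro y
    by_cases hy : y ∈ B r
    · have := mul_le_mul_of_nonneg_left (hgr y hy) (hf0 y)
      linarith [mul_nonneg hM (hφmax y)]
    · have hmax : max (ρ y / ε) (r / (L * ε)) = ρ y / ε := by
        refine max_eq_left ?_
        rw [← div_div]
        exact div_le_div_of_nonneg_right
          ((div_le_iff₀' hL).2 (hG.le_mul_of_notMem r y hy)) hε.le
      rw [hmax]
      have := mul_le_mul_of_nonneg_left (hgM y) (hf0 y)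
      linarith [mul_nonneg hη (hf0 y)]
  have hbound := inv_integral_mul_integral_le_add_div hf0 hg0 hη hM
    (by have := dyadicConst_pos hq; positivity) (by positivity)
    (hG.mul_rpow_le_integral hφ hφnn hε hr₀ hfi) hsplit
    (hG.lintegral_comp_max_le hq hΓ hL hφ hφnn hφint hε (by positivity))
  refine hbound.trans_eq ?_
  field_simp

theorem tendsto_inv_integral_mul_integral (hG : IsAhlforsGauge ν ρ B q γ Γ L) (hq : 0 < q)
    (hγ : 0 < γ) (hΓ : 0 ≤ Γ) (hL : 0 < L) (hφ : AntitoneOn φ (Ici 0))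
    (hφnn : ∀ t, 0 ≤ t → 0 ≤ φ t) (hφint : IntegrableOn (fun t => φ t * t ^ (q - 1)) (Ioi 0))
    (hφpos : 0 < ∫ t in Ioi 0, φ t * t ^ (q - 1)) {g : Y → ℝ} {M : ℝ} (hg0 : ∀ y, 0 ≤ g y)
    (hM : 0 ≤ M) (hgM : ∀ y, g y ≤ M) (hgB : ∀ η > 0, ∃ r > 0, ∀ y ∈ B r, g y ≤ η) :
    Tendsto (fun ε => (∫ y, φ (ρ y / ε) ∂ν)⁻¹ * ∫ y, φ (ρ y / ε) * g y ∂ν) (𝓝[>] 0) (𝓝 0) := by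
  obtain ⟨r₀, hr₀, hφr₀⟩ : ∃ r₀ > 0, 0 < φ r₀ := by
    obtain ⟨t, ht, hφt⟩ := exists_ne_zero_of_setIntegral_ne_zero hφpos.ne'
    exact ⟨t, ht, (hφnn t (le_of_lt ht)).lt_of_ne' (left_ne_zero_of_mul hφt)⟩
  rw [Metric.tendsto_nhds]
  intro δ hδ
  obtain ⟨r, hr, hgr⟩ := hgB (δ / 2) (half_pos hδ)
  set A := M * (Γ * (2 * L) ^ q * dyadicConst q) / (φ r₀ * γ * r₀ ^ q)
  have hradius : Tendsto (fun ε => r / (L * ε) / 2) (𝓝[>] 0) atTop :=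
    (tendsto_inv_nhdsGT_zero.const_mul_atTop (by positivity : 0 < r / L / 2)).congr
      fun ε => by ring
  have htail : Tendsto (fun ε => A * ∫ t in Ioi (r / (L * ε) / 2), φ t * t ^ (q - 1))
      (𝓝[>] 0) (𝓝 0) := by
    simpa using (tendsto_integral_Ioi_zero hradius).const_mul A
  filter_upwards [self_mem_nhdsWithin, htail.eventually (gt_mem_nhds (half_pos hδ))]
    with ε hε hsmall
  by_cases hfi : Integrable (fun y => φ (ρ y / ε)) ν
  · have hf0 : ∀ y, 0 ≤ φ (ρ y / ε) := fun y => hφnn _ (div_nonneg (hG.nonneg y) (le_of_lt hε))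
    rw [dist_zero_right, Real.norm_of_nonneg (mul_nonneg (inv_nonneg.2 (integral_nonneg hf0))
      (integral_nonneg fun y => mul_nonneg (hf0 y) (hg0 y)))]
    have := hG.inv_integral_mul_integral_le hq hγ hΓ hL hφ hφnn hφint hg0 hM hgM
      (half_pos hδ).le hr hgr hr₀ hφr₀ hε hfi
    linarith
  · simpa [integral_undef hfi] using hδ

end IsAhlforsGauge

section Hypermetric

variable {X : Type*} [Nonempty X] {d : X → X → ℝ} {k : ℕ}

theorem rho_nonneg (hnn : ∀ x y, 0 ≤ d x y) (x : X) (y : Fin k → X) : 0 ≤ rho d x y :=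
  Real.iInf_nonneg fun _ => Real.iSup_nonneg fun _ => hnn _ _

theorem rho_le_of_forall_le (hnn : ∀ x y, 0 ≤ d x y) (hsym : ∀ x y, d x y = d y x)
    (hself : ∀ x, d x x = 0) {x : X} {y : Fin k → X} {s : ℝ} (hs : 0 ≤ s)
    (h : ∀ j, d x (y j) ≤ s) : rho d x y ≤ s := by
  refine ciInf_le_of_le ⟨0, ?_⟩ x (ciSup_le fun i => Fin.cases ?_ (fun j => ?_) i)
  · rintro _ ⟨u, rfl⟩
    exact Real.iSup_nonneg fun _ => hnn _ _
  · simpa [hself] using hs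
  · simpa [hsym (y j) x] using h j

theorem le_two_mul_rho {κ : ℝ} (hκ : 0 ≤ κ) (hsym : ∀ x y, d x y = d y x)
    (htri : ∀ x y z, d x z ≤ κ * (d x y + d y z)) (x : X) (y : Fin k → X) (j : Fin k) :
    d x (y j) ≤ 2 * κ * rho d x y := by
  rw [rho, Real.mul_iInf_of_nonneg (by positivity)]
  refine le_ciInf fun u => ?_
  have hbdd := (finite_range fun i => d ((Fin.cons x y : Fin (k + 1) → X) i) u).bddAbove
  have hx : d x u ≤ ⨆ i, d ((Fin.cons x y : Fin (k + 1) → X) i) u := by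
    simpa using le_ciSup hbdd 0
  have hy : d (y j) u ≤ ⨆ i, d ((Fin.cons x y : Fin (k + 1) → X) i) u := by
    simpa using le_ciSup hbdd j.succ
  calc d x (y j) ≤ κ * (d x u + d (y j) u) := hsym u (y j) ▸ htri x u (y j)
    _ ≤ _ := by nlinarith

end Hypermetric

theorem sigmaFinite_of_measure_setOf_lt_lt_top {X : Type*} [MeasurableSpace X] {μ : Measure X}
    {d : X → X → ℝ} (x : X) (h : ∀ r > 0, μ {y | d x y < r} < ⊤) : SigmaFinite μ := by
  refine Measure.sigmaFinite_of_countable (countable_range fun n : ℕ => {y | d x y < n + 1})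
    (forall_mem_range.2 fun n => h _ (by positivity)) (eq_univ_of_forall fun y => ?_)
  obtain ⟨n, hn⟩ := exists_nat_gt (d x y)
  exact mem_sUnion.2 ⟨_, mem_range_self n, show d x y < n + 1 by linarith⟩

theorem isAhlforsGauge_rho {X : Type*} [Nonempty X] [MeasurableSpace X] {d : X → X → ℝ}
    {κ α γ Γ : ℝ} (hκ : 0 ≤ κ) (hγ : 0 ≤ γ) (hΓ : 0 ≤ Γ) (hnn : ∀ x y, 0 ≤ d x y)
    (hsym : ∀ x y, d x y = d y x) (hself : ∀ x, d x x = 0)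
    (htri : ∀ x y z, d x z ≤ κ * (d x y + d y z)) {μ : Measure X} [SigmaFinite μ] {x : X}
    (hAhl : ∀ r > 0, ENNReal.ofReal (γ * r ^ α) ≤ μ {y | d x y < r} ∧
      μ {y | d x y < r} ≤ ENNReal.ofReal (Γ * r ^ α)) (k : ℕ) :
    IsAhlforsGauge (Measure.pi fun _ : Fin k => μ) (rho d x)
      (fun s => {y | ∀ j, d x (y j) < s}) (k * α) (γ ^ k) (Γ ^ k) (2 * κ) := by
  have hball : ∀ s, Measure.pi (fun _ : Fin k => μ) {y | ∀ j, d x (y j) < s} =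
      μ {z | d x z < s} ^ k := fun s => by
    rw [show {y : Fin k → X | ∀ j, d x (y j) < s} = univ.pi fun _ => {z | d x z < s} by
      ext; simp, Measure.pi_pi, Finset.prod_const, Finset.card_univ, Fintype.card_fin]
  have hpow : ∀ c s : ℝ, 0 ≤ c → 0 < s →
      ENNReal.ofReal (c ^ k * s ^ ((k : ℝ) * α)) = ENNReal.ofReal (c * s ^ α) ^ k := by
    intro c s hc hs
    rw [← ENNReal.ofReal_pow (by positivity), mul_pow, mul_comm (k : ℝ),
      Real.rpow_mul_natCast hs.le]
  refine ⟨rho_nonneg hnn x, fun s t hst y hy j => (hy j).trans_le hst, fun y => ?_,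
    fun s hs => ?_, fun s hs => ?_, fun s hs y hy => ?_, fun s y hy => ?_⟩
  · refine ⟨∑ j, d x (y j) + 1, fun j => ?_⟩
    have := Finset.single_le_sum (fun i _ => hnn x (y i)) (Finset.mem_univ j)
    linarith
  · rw [hpow γ s hγ hs, hball]
    exact pow_le_pow_left' (hAhl s hs).1 k
  · rw [hpow Γ s hΓ hs, hball]
    exact pow_le_pow_left' (hAhl s hs).2 k
  · exact rho_le_of_forall_le hnn hsym hself hs.le fun j => (hy j).le
  · obtain ⟨j, hj⟩ : ∃ j, s ≤ d x (y j) := by simpa using hy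
    exact hj.trans (le_two_mul_rho hκ hsym htri x y j)

theorem exists_forall_dist_lt_abs_sub_le {ι X : Type*} [Finite ι] [TopologicalSpace X]
    {d : X → X → ℝ} {x : X}
    (hx : (𝓝 x).HasBasis (fun r : ℝ => 0 < r) (fun r => {y | d x y < r}))
    {F : (ι → X) → ℝ} (hF : ContinuousAt F fun _ => x) {η : ℝ} (hη : 0 < η) :
    ∃ r > 0, ∀ y : ι → X, (∀ j, d x (y j) < r) → |F y - F fun _ => x| ≤ η := by
  have hU := hF.preimage_mem_nhds (Metric.closedBall_mem_nhds (F fun _ => x) hη)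
  rw [nhds_pi, Filter.mem_pi] at hU
  obtain ⟨I, -, V, hV, hVU⟩ := hU
  obtain ⟨r, hr, hball⟩ := hx.mem_iff.1 (iInter_mem.2 hV)
  refine ⟨r, hr, fun y hy => ?_⟩
  have := hVU fun j _ => mem_iInter.1 (hball (hy j)) j
  rwa [mem_preimage, Metric.mem_closedBall, Real.dist_eq] at this

theorem exists_forall_abs_prod_le {ι X : Type*} [Fintype ι] [TopologicalSpace X]
    {ψ : ι → X → ℝ} (hψc : ∀ j, Continuous (ψ j)) (hψs : ∀ j, HasCompactSupport (ψ j)) :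
    ∃ C, ∀ y : ι → X, |∏ j, ψ j (y j)| ≤ C := by
  choose C hC using fun j => (hψs j).exists_bound_of_continuous (hψc j)
  exact ⟨∏ j, C j, fun y => (Finset.abs_prod _ _).trans_le
    (Finset.prod_le_prod (fun j _ => abs_nonneg _) fun j _ => hC j (y j))⟩

theorem stmt15_general {X : Type*} [Nonempty X] [MeasurableSpace X] [TopologicalSpace X]
    (d : X → X → ℝ)
    (κ α γ Γ : ℝ) (hκ : 1 ≤ κ) (hα : 0 < α) (hγ : 0 < γ) (hγΓ : γ ≤ Γ)
    (hnn : ∀ x y, 0 ≤ d x y) (hsym : ∀ x y, d x y = d y x)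
    (hzero : ∀ x y, d x y = 0 ↔ x = y)
    (htri : ∀ x y z, d x z ≤ κ * (d x y + d y z))
    (hbasis : ∀ x : X, (𝓝 x).HasBasis (fun r : ℝ => 0 < r) (fun r => {y | d x y < r}))
    (μ : Measure X)
    (hAhl : ∀ (x : X) (r : ℝ), 0 < r →
      ENNReal.ofReal (γ * r ^ α) ≤ μ {y | d x y < r} ∧
      μ {y | d x y < r} ≤ ENNReal.ofReal (Γ * r ^ α))
    (k : ℕ) (hk : 0 < k)
    (φ : ℝ → ℝ) (hφnn : ∀ t, 0 ≤ t → 0 ≤ φ t)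
    (hφmono : ∀ s t, 0 ≤ s → s ≤ t → φ t ≤ φ s)
    (hφint : IntegrableOn (fun t => φ t * t ^ ((k : ℝ) * α - 1)) (Ioi (0 : ℝ)))
    (hφpos : 0 < ∫ t in Ioi (0 : ℝ), φ t * t ^ ((k : ℝ) * α - 1))
    (ψ : Fin k → X → ℝ) (hψc : ∀ j, Continuous (ψ j))
    (hψs : ∀ j, HasCompactSupport (ψ j))
    (x : X) :
    Tendsto (fun ε : ℝ =>
        (∫ y : Fin k → X, φ (rho d x y / ε) ∂(Measure.pi fun _ : Fin k => μ))⁻¹ *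
          ∫ y : Fin k → X, φ (rho d x y / ε) * |(∏ j, ψ j (y j)) - ∏ j, ψ j x|
            ∂(Measure.pi fun _ : Fin k => μ))
      (𝓝[>] 0) (𝓝 0) := by
  have hκ0 : 0 < κ := zero_lt_one.trans_le hκ
  have hΓ : 0 < Γ := hγ.trans_le hγΓ
  have : SigmaFinite μ := sigmaFinite_of_measure_setOf_lt_lt_top x fun r hr =>
    (hAhl x r hr).2.trans_lt ENNReal.ofReal_lt_top
  have hG := isAhlforsGauge_rho hκ0.le hγ.le hΓ.le hnn hsym (fun x => (hzero x x).2 rfl) htri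
    (hAhl x) k
  obtain ⟨C, hC⟩ := exists_forall_abs_prod_le hψc hψs
  have hC0 : 0 ≤ C := (abs_nonneg _).trans (hC fun _ => x)
  have hgC : ∀ y : Fin k → X, |(∏ j, ψ j (y j)) - ∏ j, ψ j x| ≤ C + C := fun y =>
    (abs_sub _ _).trans (add_le_add (hC y) (hC fun _ => x))
  have hprod : Continuous fun y : Fin k → X => ∏ j, ψ j (y j) :=
    continuous_finsetProd _ fun j _ => (hψc j).comp (continuous_apply j)
  exact hG.tendsto_inv_integral_mul_integral (mul_pos (Nat.cast_pos.2 hk) hα) (pow_pos hγ k)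
    (pow_nonneg hΓ.le k) (by positivity) (fun s hs t _ hst => hφmono s t hs hst) hφnn hφint
    hφpos (fun y => abs_nonneg _) (add_nonneg hC0 hC0) hgC
    fun η hη => exists_forall_dist_lt_abs_sub_le (hbasis x) hprod.continuousAt hη

/-- On a complete `α`-Ahlfors regular space, for nonincreasing `φ` with
`0 < ∫₀^∞ φ(t) t^{kα-1} dt < ∞` and continuous compactly supported `ψ₁,…,ψ_k`,
the mollified means of `|∏ⱼ ψⱼ(xⱼ) − ∏ⱼ ψⱼ(x)|` tend to `0` as `ε → 0⁺`,
for every `x ∈ X`. -/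
theorem stmt15 {X : Type*} [Nonempty X] [MeasurableSpace X] [TopologicalSpace X]
    (d : X → X → ℝ)
    (κ α γ Γ : ℝ) (hκ : 1 ≤ κ) (hα : 0 < α) (hγ : 0 < γ) (hγΓ : γ ≤ Γ)
    (hnn : ∀ x y, 0 ≤ d x y) (hsym : ∀ x y, d x y = d y x)
    (hzero : ∀ x y, d x y = 0 ↔ x = y)
    (htri : ∀ x y z, d x z ≤ κ * (d x y + d y z))
    (hbasis : ∀ x : X, (𝓝 x).HasBasis (fun r : ℝ => 0 < r) (fun r => {y | d x y < r}))
    (hcomplete : ∀ u : ℕ → X,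
      (∀ ε > 0, ∃ N, ∀ m ≥ N, ∀ n ≥ N, d (u m) (u n) < ε) →
      ∃ x : X, Tendsto u atTop (𝓝 x))
    (μ : Measure X)
    (hAhl : ∀ (x : X) (r : ℝ), 0 < r →
      ENNReal.ofReal (γ * r ^ α) ≤ μ {y | d x y < r} ∧
      μ {y | d x y < r} ≤ ENNReal.ofReal (Γ * r ^ α))
    (k : ℕ) (hk : 0 < k)
    (φ : ℝ → ℝ) (hφnn : ∀ t, 0 ≤ t → 0 ≤ φ t)
    (hφmono : ∀ s t, 0 ≤ s → s ≤ t → φ t ≤ φ s)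
    (hφint : IntegrableOn (fun t => φ t * t ^ ((k : ℝ) * α - 1)) (Ioi (0 : ℝ)))
    (hφpos : 0 < ∫ t in Ioi (0 : ℝ), φ t * t ^ ((k : ℝ) * α - 1))
    (ψ : Fin k → X → ℝ) (hψc : ∀ j, Continuous (ψ j))
    (hψs : ∀ j, HasCompactSupport (ψ j))
    (x : X) :
    Tendsto (fun ε : ℝ =>
        (∫ y : Fin k → X, φ (rho d x y / ε) ∂(Measure.pi fun _ : Fin k => μ))⁻¹ *
          ∫ y : Fin k → X, φ (rho d x y / ε) * |(∏ j, ψ j (y j)) - ∏ j, ψ j x|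
            ∂(Measure.pi fun _ : Fin k => μ))
      (𝓝[>] 0) (𝓝 0) :=
  stmt15_general d κ α γ Γ hκ hα hγ hγΓ hnn hsym hzero htri hbasis μ hAhl k hk φ hφnn hφmono hφint
    hφpos ψ hψc hψs x
end
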